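/- arXiv:2005.01933 — 2 statements merged into one kernel-verified Lean document; each statement's English description precedes it below -/
import Mathlib

section
/- Let A and B be C*-algebras and φ: A → B a surjective *-homomorphism. Then φ extends to a *-homomorphism from the multiplier algebra M(A) to the multiplier algebra M(B), i.e. there exists a *-homomorphism φ̃: M(A) → M(B) such that φ̃(m)·φ(a) = φ(m·a) and φ(a)·φ̃(m) = φ(a·m) for all m ∈ M(A) and a ∈ A. -/
open scoped MultiplierAlgebra

set_option maxHeartbeats 1000000

section Aux

variable {A : Type*} [NonUnitalCStarAlgebra A]

private lemma auxCancelLeft {c d : A} (h : ∀ z : A, z * c = z * d) : c = d := by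
  have h2 : star (c - d) * (c - d) = 0 := by
    rw [mul_sub, h (star (c - d)), sub_self]
  exact sub_eq_zero.mp <| (CStarRing.star_mul_self_eq_zero_iff _).mp h2

private lemma auxCancelRight {c d : A} (h : ∀ z : A, c * z = d * z) : c = d := by
  have h2 : (c - d) * star (c - d) = 0 := by
    rw [sub_mul, h (star (c - d)), sub_self]
  exact sub_eq_zero.mp <| (CStarRing.mul_star_self_eq_zero_iff _).mp h2

private lemma aux_fst_mul (m : 𝓜(ℂ, A)) (a b : A) : m.fst (a * b) = m.fst a * b := by
  refine auxCancelLeft fun z => ?_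
  rw [← m.central z (a * b), ← mul_assoc, m.central z a, mul_assoc]

private lemma aux_snd_mul (m : 𝓜(ℂ, A)) (a b : A) : m.snd (a * b) = a * m.snd b := by
  refine auxCancelRight fun z => ?_
  rw [m.central (a * b) z, mul_assoc, ← m.central b z, ← mul_assoc]

private lemma aux_mul_coe (m : 𝓜(ℂ, A)) (a : A) :
    m * (a : 𝓜(ℂ, A)) = ((m.fst a : A) : 𝓜(ℂ, A)) := by
  refine DoubleCentralizer.ext _ _ _ _ (Prod.ext ?_ ?_) <;> ext y
  · show m.fst (a * y) = m.fst a * y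
    exact aux_fst_mul m a y
  · show m.snd y * a = y * m.fst a
    exact m.central y a

private lemma aux_coe_mul (m : 𝓜(ℂ, A)) (a : A) :
    (a : 𝓜(ℂ, A)) * m = ((m.snd a : A) : 𝓜(ℂ, A)) := by
  refine DoubleCentralizer.ext _ _ _ _ (Prod.ext ?_ ?_) <;> ext y
  · show a * m.fst y = m.snd a * y
    exact (m.central a y).symm
  · show m.snd (y * a) = y * m.snd a
    exact aux_snd_mul m y a

private lemma aux_approx_left (k : A) {ε : ℝ} (hε : 0 < ε) :
    ∃ e : A, ‖k - e * k‖ ≤ ε := by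
  have hx : IsSelfAdjoint (k * star k) := IsSelfAdjoint.mul_star_self k
  set x : A := k * star k with hx_def
  set f : ℝ → ℝ := fun t => t ^ 2 / (t ^ 2 + ε ^ 4) with hf_def
  have hfc : Continuous f := by
    rw [hf_def]
    exact (continuous_pow 2).div (by continuity) fun t => by positivity
  have hf0 : f 0 = 0 := by simp [hf_def]
  refine ⟨cfcₙ f x, ?_⟩
  obtain ⟨e, he_def⟩ : ∃ e : A, e = cfcₙ f x := ⟨_, rfl⟩
  rw [← he_def]
  have he : IsSelfAdjoint e := he_def ▸ cfcₙ_predicate f x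
  have hft : Continuous fun t : ℝ => f t * t := hfc.mul continuous_id
  have htf : Continuous fun t : ℝ => t * f t := continuous_id.mul hfc
  have hftf : Continuous fun t : ℝ => f t * (t * f t) := hfc.mul htf
  have h1 : cfcₙ (fun t : ℝ => f t * t) x = e * x := by
    rw [cfcₙ_mul f (fun t => t) x hfc.continuousOn hf0 continuousOn_id rfl,
      cfcₙ_id' ℝ x hx, ← he_def]
  have h2 : cfcₙ (fun t : ℝ => t * f t) x = x * e := by
    rw [cfcₙ_mul (fun t => t) f x continuousOn_id rfl hfc.continuousOn hf0,
      cfcₙ_id' ℝ x hx, ← he_def]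
  have h3 : cfcₙ (fun t : ℝ => f t * (t * f t)) x = e * (x * e) := by
    rw [cfcₙ_mul f (fun t => t * f t) x hfc.continuousOn hf0 htf.continuousOn
      (by simp [hf0]), h2, ← he_def]
  have hA : cfcₙ (fun t : ℝ => t - f t * t) x = x - e * x := by
    rw [cfcₙ_sub (fun t => t) (fun t => f t * t) x continuousOn_id rfl hft.continuousOn
      (by simp [hf0]), cfcₙ_id' ℝ x hx, h1]
  have hB : cfcₙ (fun t : ℝ => t * f t - f t * (t * f t)) x = x * e - e * (x * e) := by
    rw [cfcₙ_sub (fun t => t * f t) (fun t => f t * (t * f t)) x htf.continuousOn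
      (by simp [hf0]) hftf.continuousOn (by simp [hf0]), h2, h3]
  have hsubc1 : Continuous fun t : ℝ => t - f t * t := continuous_id.sub hft
  have hsubc2 : Continuous fun t : ℝ => t * f t - f t * (t * f t) := htf.sub hftf
  have hmain : (k - e * k) * star (k - e * k)
      = cfcₙ (fun t : ℝ => (t - f t * t) - (t * f t - f t * (t * f t))) x := by
    rw [cfcₙ_sub (fun t : ℝ => t - f t * t) (fun t : ℝ => t * f t - f t * (t * f t)) x
      hsubc1.continuousOn (by simp [hf0]) hsubc2.continuousOn (by simp [hf0]),
      hA, hB, star_sub, star_mul, he.star_eq, hx_def]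
    noncomm_ring
  have hb : ‖cfcₙ (fun t : ℝ => (t - f t * t) - (t * f t - f t * (t * f t))) x‖ ≤ ε ^ 2 := by
    apply norm_cfcₙ_le
    intro t _
    have ht : (0 : ℝ) < t ^ 2 + ε ^ 4 := by positivity
    have e2 : (1 : ℝ) - f t = ε ^ 4 / (t ^ 2 + ε ^ 4) := by
      simp only [hf_def]
      field_simp
      ring
    have e1 : (t - f t * t) - (t * f t - f t * (t * f t)) = t * ((1 : ℝ) - f t) ^ 2 := by
      ring
    rw [Real.norm_eq_abs, e1, e2, abs_mul,
      abs_of_nonneg (by positivity : (0 : ℝ) ≤ (ε ^ 4 / (t ^ 2 + ε ^ 4)) ^ 2),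
      div_pow, ← mul_div_assoc, div_le_iff₀ (by positivity)]
    have hAM : 2 * (|t| * ε ^ 2) ≤ t ^ 2 + ε ^ 4 := by
      nlinarith [sq_nonneg (|t| - ε ^ 2), sq_abs t]
    have h5 : (2 * (|t| * ε ^ 2)) * ε ^ 4 ≤ (t ^ 2 + ε ^ 4) * (t ^ 2 + ε ^ 4) :=
      mul_le_mul hAM (by nlinarith [sq_nonneg t]) (by positivity)
        (by nlinarith [sq_nonneg t, pow_pos hε 4])
    nlinarith [mul_le_mul_of_nonneg_left h5 (le_of_lt (pow_pos hε 2)),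
      mul_nonneg (abs_nonneg t) (le_of_lt (pow_pos hε 8))]
  have hsq : ‖k - e * k‖ * ‖k - e * k‖ ≤ ε ^ 2 := by
    rw [← CStarRing.norm_self_mul_star, hmain]
    exact hb
  nlinarith [norm_nonneg (k - e * k), hε, hsq]

private lemma aux_approx_right (k : A) {ε : ℝ} (hε : 0 < ε) :
    ∃ e : A, ‖k - k * e‖ ≤ ε := by
  obtain ⟨e, he⟩ := aux_approx_left (star k) hε
  refine ⟨star e, ?_⟩
  calc ‖k - k * star e‖ = ‖star (k - k * star e)‖ := (norm_star _).symm
    _ = ‖star k - e * star k‖ := by rw [star_sub, star_mul, star_star]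
    _ ≤ ε := he

variable {B : Type*} [NonUnitalCStarAlgebra B]

private lemma aux_ker_fst (φ : A →⋆ₙₐ[ℂ] B) (m : 𝓜(ℂ, A)) {k : A} (hk : φ k = 0) :
    φ (m.fst k) = 0 := by
  rw [← norm_le_zero_iff]
  refine le_of_forall_gt_imp_ge_of_dense fun ε hε => ?_
  have hε' : 0 < ε / (‖m.fst‖ + 1) := by positivity
  obtain ⟨e, he⟩ := aux_approx_left k hε'
  have h0 : φ (m.fst (e * k)) = 0 := by rw [aux_fst_mul, map_mul, hk, mul_zero]
  have hrw : ‖φ (m.fst k)‖ = ‖φ (m.fst (k - e * k))‖ := by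
    conv_rhs => rw [map_sub, map_sub, h0, sub_zero]
  rw [hrw]
  calc ‖φ (m.fst (k - e * k))‖ ≤ ‖m.fst (k - e * k)‖ :=
        NonUnitalStarAlgHom.norm_apply_le φ _
    _ ≤ ‖m.fst‖ * ‖k - e * k‖ := m.fst.le_opNorm _
    _ ≤ ‖m.fst‖ * (ε / (‖m.fst‖ + 1)) := by
        exact mul_le_mul_of_nonneg_left he (norm_nonneg _)
    _ ≤ (‖m.fst‖ + 1) * (ε / (‖m.fst‖ + 1)) := by
        have := hε'.le
        gcongr
        linarith
    _ = ε := by field_simp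

private lemma aux_ker_snd (φ : A →⋆ₙₐ[ℂ] B) (m : 𝓜(ℂ, A)) {k : A} (hk : φ k = 0) :
    φ (m.snd k) = 0 := by
  rw [← norm_le_zero_iff]
  refine le_of_forall_gt_imp_ge_of_dense fun ε hε => ?_
  have hε' : 0 < ε / (‖m.snd‖ + 1) := by positivity
  obtain ⟨e, he⟩ := aux_approx_right k hε'
  have h0 : φ (m.snd (k * e)) = 0 := by rw [aux_snd_mul, map_mul, hk, zero_mul]
  have hrw : ‖φ (m.snd k)‖ = ‖φ (m.snd (k - k * e))‖ := by
    conv_rhs => rw [map_sub, map_sub, h0, sub_zero]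
  rw [hrw]
  calc ‖φ (m.snd (k - k * e))‖ ≤ ‖m.snd (k - k * e)‖ :=
        NonUnitalStarAlgHom.norm_apply_le φ _
    _ ≤ ‖m.snd‖ * ‖k - k * e‖ := m.snd.le_opNorm _
    _ ≤ ‖m.snd‖ * (ε / (‖m.snd‖ + 1)) := by
        exact mul_le_mul_of_nonneg_left he (norm_nonneg _)
    _ ≤ (‖m.snd‖ + 1) * (ε / (‖m.snd‖ + 1)) := by
        have := hε'.le
        gcongr
        linarith
    _ = ε := by field_simp

end Aux

private theorem aux_main (A B : Type*) [NonUnitalCStarAlgebra A] [NonUnitalCStarAlgebra B]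
    (φ : A →⋆ₙₐ[ℂ] B) (hφ : Function.Surjective φ) :
    ∃ φext : 𝓜(ℂ, A) →⋆ₐ[ℂ] 𝓜(ℂ, B),
      (∀ a : A, φext (a : 𝓜(ℂ, A)) = (φ a : 𝓜(ℂ, B))) ∧
      (∀ (m : 𝓜(ℂ, A)) (a : A), ∃ b : A,
        ((b : 𝓜(ℂ, A)) = m * (a : 𝓜(ℂ, A)) ∧
          φext m * (φ a : 𝓜(ℂ, B)) = (φ b : 𝓜(ℂ, B)))) ∧
      (∀ (m : 𝓜(ℂ, A)) (a : A), ∃ b : A,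
        ((b : 𝓜(ℂ, A)) = (a : 𝓜(ℂ, A)) * m ∧
          (φ a : 𝓜(ℂ, B)) * φext m = (φ b : 𝓜(ℂ, B)))) := by
  have key_fst : ∀ (m : 𝓜(ℂ, A)) (a a' : A), φ a = φ a' → φ (m.fst a) = φ (m.fst a') := by
    intro m a a' h
    have h1 : φ (a - a') = 0 := by rw [map_sub, h, sub_self]
    have h2 := aux_ker_fst φ m h1
    rw [map_sub, map_sub, sub_eq_zero] at h2
    exact h2
  have key_snd : ∀ (m : 𝓜(ℂ, A)) (a a' : A), φ a = φ a' → φ (m.snd a) = φ (m.snd a') := by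
    intro m a a' h
    have h1 : φ (a - a') = 0 := by rw [map_sub, h, sub_self]
    have h2 := aux_ker_snd φ m h1
    rw [map_sub, map_sub, sub_eq_zero] at h2
    exact h2
  let φₗ : A →ₗ[ℂ] B :=
    { toFun := φ, map_add' := map_add φ, map_smul' := fun c x => map_smul φ c x }
  let φL : A →L[ℂ] B := φₗ.mkContinuous 1 fun a => by
    rw [one_mul]; exact NonUnitalStarAlgHom.norm_apply_le φ a
  have hφL : Function.Surjective φL := hφ
  obtain ⟨C, hC0, hC⟩ := φL.exists_preimage_norm_le hφL
  choose σ hσ using hφ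
  have hφ2 : Function.Surjective φ := fun b => ⟨σ b, hσ b⟩
  have hLbound : ∀ (m : 𝓜(ℂ, A)) (b : B), ‖φ (m.fst (σ b))‖ ≤ ‖m.fst‖ * C * ‖b‖ := by
    intro m b
    obtain ⟨a, ha, hna⟩ := hC b
    have ha' : φ a = b := ha
    rw [key_fst m (σ b) a (by rw [hσ b, ha'])]
    calc ‖φ (m.fst a)‖ ≤ ‖m.fst a‖ := NonUnitalStarAlgHom.norm_apply_le φ _
      _ ≤ ‖m.fst‖ * ‖a‖ := m.fst.le_opNorm a
      _ ≤ ‖m.fst‖ * (C * ‖b‖) := mul_le_mul_of_nonneg_left hna (norm_nonneg _)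
      _ = ‖m.fst‖ * C * ‖b‖ := by ring
  have hRbound : ∀ (m : 𝓜(ℂ, A)) (b : B), ‖φ (m.snd (σ b))‖ ≤ ‖m.snd‖ * C * ‖b‖ := by
    intro m b
    obtain ⟨a, ha, hna⟩ := hC b
    have ha' : φ a = b := ha
    rw [key_snd m (σ b) a (by rw [hσ b, ha'])]
    calc ‖φ (m.snd a)‖ ≤ ‖m.snd a‖ := NonUnitalStarAlgHom.norm_apply_le φ _
      _ ≤ ‖m.snd‖ * ‖a‖ := m.snd.le_opNorm a
      _ ≤ ‖m.snd‖ * (C * ‖b‖) := mul_le_mul_of_nonneg_left hna (norm_nonneg _)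
      _ = ‖m.snd‖ * C * ‖b‖ := by ring
  let L : 𝓜(ℂ, A) → B →L[ℂ] B := fun m => LinearMap.mkContinuous
    { toFun := fun b => φ (m.fst (σ b))
      map_add' := fun b b' => by
        show φ (m.fst (σ (b + b'))) = φ (m.fst (σ b)) + φ (m.fst (σ b'))
        rw [key_fst m (σ (b + b')) (σ b + σ b') (by rw [map_add, hσ, hσ, hσ]),
          map_add, map_add]
      map_smul' := fun c b => by
        show φ (m.fst (σ (c • b))) = (RingHom.id ℂ) c • φ (m.fst (σ b))
        rw [key_fst m (σ (c • b)) (c • σ b) (by rw [map_smul, hσ, hσ])]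
        simp only [map_smul, RingHom.id_apply] }
    (‖m.fst‖ * C) (hLbound m)
  let R : 𝓜(ℂ, A) → B →L[ℂ] B := fun m => LinearMap.mkContinuous
    { toFun := fun b => φ (m.snd (σ b))
      map_add' := fun b b' => by
        show φ (m.snd (σ (b + b'))) = φ (m.snd (σ b)) + φ (m.snd (σ b'))
        rw [key_snd m (σ (b + b')) (σ b + σ b') (by rw [map_add, hσ, hσ, hσ]),
          map_add, map_add]
      map_smul' := fun c b => by
        show φ (m.snd (σ (c • b))) = (RingHom.id ℂ) c • φ (m.snd (σ b))
        rw [key_snd m (σ (c • b)) (c • σ b) (by rw [map_smul, hσ, hσ])]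
        simp only [map_smul, RingHom.id_apply] }
    (‖m.snd‖ * C) (hRbound m)
  have hL : ∀ (m : 𝓜(ℂ, A)) (a : A), L m (φ a) = φ (m.fst a) := fun m a =>
    key_fst m (σ (φ a)) a (hσ (φ a))
  have hR : ∀ (m : 𝓜(ℂ, A)) (a : A), R m (φ a) = φ (m.snd a) := fun m a =>
    key_snd m (σ (φ a)) a (hσ (φ a))
  let Φ : 𝓜(ℂ, A) → 𝓜(ℂ, B) := fun m =>
    { toProd := (L m, R m)
      central := fun x y => by
        obtain ⟨a, rfl⟩ := hφ2 x
        obtain ⟨a', rfl⟩ := hφ2 y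
        show R m (φ a) * φ a' = φ a * L m (φ a')
        rw [hR m a, hL m a', ← map_mul, ← map_mul, m.central] }
  have hΦfst : ∀ (m : 𝓜(ℂ, A)) (a : A), (Φ m).fst (φ a) = φ (m.fst a) := fun m a => hL m a
  have hΦsnd : ∀ (m : 𝓜(ℂ, A)) (a : A), (Φ m).snd (φ a) = φ (m.snd a) := fun m a => hR m a
  have extB : ∀ u v : 𝓜(ℂ, B), (∀ a : A, u.fst (φ a) = v.fst (φ a)) →
      (∀ a : A, u.snd (φ a) = v.snd (φ a)) → u = v := by
    intro u v h1 h2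
    refine DoubleCentralizer.ext _ _ _ _ (Prod.ext ?_ ?_)
    · ext y; obtain ⟨a, rfl⟩ := hφ2 y; exact h1 a
    · ext y; obtain ⟨a, rfl⟩ := hφ2 y; exact h2 a
  refine ⟨{ toFun := Φ,
            map_one' := ?_, map_mul' := ?_, map_zero' := ?_, map_add' := ?_,
            commutes' := ?_, map_star' := ?_ }, ?_, ?_, ?_⟩
  · -- map_one
    refine extB _ _ (fun a => ?_) (fun a => ?_)
    · simp [hΦfst, DoubleCentralizer.one_fst]
    · simp [hΦsnd, DoubleCentralizer.one_snd]
  · -- map_mul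
    intro m n
    refine extB _ _ (fun a => ?_) (fun a => ?_)
    · simp only [hΦfst, DoubleCentralizer.mul_fst, ContinuousLinearMap.mul_apply]
    · simp only [hΦsnd, DoubleCentralizer.mul_snd, ContinuousLinearMap.mul_apply]
  · -- map_zero
    refine extB _ _ (fun a => ?_) (fun a => ?_)
    · simp [hΦfst, DoubleCentralizer.zero_fst]
    · simp [hΦsnd, DoubleCentralizer.zero_snd]
  · -- map_add
    intro m n
    refine extB _ _ (fun a => ?_) (fun a => ?_)
    · simp [hΦfst, DoubleCentralizer.add_fst, ContinuousLinearMap.add_apply]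
    · simp [hΦsnd, DoubleCentralizer.add_snd, ContinuousLinearMap.add_apply]
  · -- commutes
    intro r
    refine extB _ _ (fun a => ?_) (fun a => ?_)
    · simp [hΦfst, DoubleCentralizer.algebraMap_fst, Algebra.algebraMap_eq_smul_one,
        ContinuousLinearMap.smul_apply, ContinuousLinearMap.one_apply, map_smul]
    · simp [hΦsnd, DoubleCentralizer.algebraMap_snd, Algebra.algebraMap_eq_smul_one,
        ContinuousLinearMap.smul_apply, ContinuousLinearMap.one_apply, map_smul]
  · -- map_star
    intro m
    refine extB _ _ (fun a => ?_) (fun a => ?_)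
    · rw [hΦfst, DoubleCentralizer.star_fst, DoubleCentralizer.star_fst,
        ← map_star φ a, hΦsnd m (star a), map_star]
    · rw [hΦsnd, DoubleCentralizer.star_snd, DoubleCentralizer.star_snd,
        ← map_star φ a, hΦfst m (star a), map_star]
  · -- coe compatibility
    intro a
    refine extB _ _ (fun a' => ?_) (fun a' => ?_)
    · show (Φ (a : 𝓜(ℂ, A))).fst (φ a') = ((φ a : 𝓜(ℂ, B))).fst (φ a')
      rw [hΦfst]
      show φ (a * a') = φ a * φ a'
      exact map_mul φ a a'
    · show (Φ (a : 𝓜(ℂ, A))).snd (φ a') = ((φ a : 𝓜(ℂ, B))).snd (φ a')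
      rw [hΦsnd]
      show φ (a' * a) = φ a' * φ a
      exact map_mul φ a' a
  · -- left multiplication
    intro m a
    refine ⟨m.fst a, (aux_mul_coe m a).symm, ?_⟩
    calc Φ m * ((φ a : B) : 𝓜(ℂ, B)) = (((Φ m).fst (φ a) : B) : 𝓜(ℂ, B)) :=
          aux_mul_coe _ _
      _ = ((φ (m.fst a) : B) : 𝓜(ℂ, B)) := by rw [hΦfst m a]
  · -- right multiplication
    intro m a
    refine ⟨m.snd a, (aux_coe_mul m a).symm, ?_⟩
    calc ((φ a : B) : 𝓜(ℂ, B)) * Φ m = (((Φ m).snd (φ a) : B) : 𝓜(ℂ, B)) :=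
          aux_coe_mul _ _
      _ = ((φ (m.snd a) : B) : 𝓜(ℂ, B)) := by rw [hΦsnd m a]

/-- Let `A` and `B` be C*-algebras and `φ : A → B` a surjective
*-homomorphism.  Then `φ` extends to a *-homomorphism `φ̃ : 𝓜(A) → 𝓜(B)` between the
multiplier algebras such that `φ̃ m * φ a = φ (m·a)` and `φ a * φ̃ m = φ (a·m)` for all
`m ∈ 𝓜(A)` and `a ∈ A`, where `m·a` (resp. `a·m`) is the unique element of `A` whose image
in `𝓜(A)` equals `m * a` (resp. `a * m`). -/
theorem multiplier_extension_of_surjective_star_hom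
    (A B : Type*)
    [NonUnitalNormedRing A] [StarRing A] [CStarRing A] [NormedSpace ℂ A]
    [SMulCommClass ℂ A A] [IsScalarTower ℂ A A] [StarModule ℂ A] [CompleteSpace A]
    [NonUnitalNormedRing B] [StarRing B] [CStarRing B] [NormedSpace ℂ B]
    [SMulCommClass ℂ B B] [IsScalarTower ℂ B B] [StarModule ℂ B] [CompleteSpace B]
    (φ : A →⋆ₙₐ[ℂ] B) (hφ : Function.Surjective φ) :
    ∃ φext : 𝓜(ℂ, A) →⋆ₐ[ℂ] 𝓜(ℂ, B),
      (∀ a : A, φext (a : 𝓜(ℂ, A)) = (φ a : 𝓜(ℂ, B))) ∧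
      (∀ (m : 𝓜(ℂ, A)) (a : A), ∃ b : A,
        ((b : 𝓜(ℂ, A)) = m * (a : 𝓜(ℂ, A)) ∧
          φext m * (φ a : 𝓜(ℂ, B)) = (φ b : 𝓜(ℂ, B)))) ∧
      (∀ (m : 𝓜(ℂ, A)) (a : A), ∃ b : A,
        ((b : 𝓜(ℂ, A)) = (a : 𝓜(ℂ, A)) * m ∧
          (φ a : 𝓜(ℂ, B)) * φext m = (φ b : 𝓜(ℂ, B)))) := by
  letI : NonUnitalCStarAlgebra A :=
    { toNonUnitalNormedRing := ‹_›, toStarRing := ‹_›, toCompleteSpace := ‹_›,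
      toCStarRing := ‹_›, toNormedSpace := ‹_›, toIsScalarTower := ‹_›,
      toSMulCommClass := ‹_›, toStarModule := ‹_› }
  letI : NonUnitalCStarAlgebra B :=
    { toNonUnitalNormedRing := ‹_›, toStarRing := ‹_›, toCompleteSpace := ‹_›,
      toCStarRing := ‹_›, toNormedSpace := ‹_›, toIsScalarTower := ‹_›,
      toSMulCommClass := ‹_›, toStarModule := ‹_› }
  exact aux_main A B φ hφ
end

section
/- The set of Schwartz functions on ℝ whose Fourier transforms have compact support is dense in C₀(ℝ) with respect to the supremum norm. -/
open scoped ZeroAtInfty FourierTransform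
open MeasureTheory Metric Filter Function ContinuousLinearMap
open scoped Convolution Topology ContDiff

/-- A smooth compactly supported function is a Schwartz function. -/
noncomputable def hasCompactSupportToSchwartz {f : ℝ → ℂ} (hf : ContDiff ℝ ∞ f)
    (hsupp : HasCompactSupport f) : SchwartzMap ℝ ℂ where
  toFun := f
  smooth' := hf
  decay' := by
    intro k n
    have h1 : HasCompactSupport (iteratedFDeriv ℝ n f) := hsupp.iteratedFDeriv n
    have h2 : HasCompactSupport fun x : ℝ => ‖x‖ ^ k * ‖iteratedFDeriv ℝ n f x‖ := by
      apply h1.norm.mul_left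
    have h3 : Continuous fun x : ℝ => ‖x‖ ^ k * ‖iteratedFDeriv ℝ n f x‖ :=
      (continuous_norm.pow k).mul (hf.continuous_iteratedFDeriv (by exact_mod_cast le_top)).norm
    obtain ⟨C, hC⟩ := h2.exists_bound_of_continuous h3
    exact ⟨C, fun x => le_trans (le_abs_self _) (hC x)⟩

@[simp] lemma hasCompactSupportToSchwartz_apply {f : ℝ → ℂ} (hf : ContDiff ℝ ∞ f)
    (hsupp : HasCompactSupport f) (x : ℝ) : hasCompactSupportToSchwartz hf hsupp x = f x := rfl

set_option maxHeartbeats 400000 in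
/-- The Schwartz functions on `ℝ` whose Fourier transforms have
compact support are dense in `C₀(ℝ)` for the supremum norm. -/
theorem schwartz_band_limited_dense_in_C0 :
    ∀ (f : C₀(ℝ, ℂ)) (ε : ℝ), 0 < ε →
      ∃ g : SchwartzMap ℝ ℂ,
        HasCompactSupport (𝓕 ⇑g) ∧ ∀ x : ℝ, ‖f x - g x‖ < ε := by
  intro f ε hε
  have hε4 : 0 < ε / 4 := by linarith
  -- Step 1: cut off `f` to a compactly supported continuous function `c`.
  have hzero : Tendsto f (cocompact ℝ) (𝓝 0) := zero_at_infty f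
  have hsmall : ∀ᶠ x in cocompact ℝ, ‖f x‖ < ε / 4 := by
    have := hzero (Metric.ball_mem_nhds 0 hε4)
    filter_upwards [this] with x hx
    simpa [dist_eq_norm] using hx
  obtain ⟨K, hKc, hK⟩ := mem_cocompact.1 hsmall
  obtain ⟨R, hR⟩ := hKc.isBounded.subset_closedBall 0
  set R' : ℝ := max R 0 with hR'
  have hR'0 : (0:ℝ) ≤ R' := le_max_right _ _
  set χ₁ : ContDiffBump (0:ℝ) := ⟨R' + 1, R' + 2, by linarith, by linarith⟩ with hχ₁
  set c : ℝ → ℂ := fun x => χ₁ x • f x with hc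
  have hc_cont : Continuous c := χ₁.continuous.smul (map_continuous f)
  have hc_supp : HasCompactSupport c := χ₁.hasCompactSupport.smul_right
  have hfc : ∀ x, ‖f x - c x‖ ≤ ε / 4 := by
    intro x
    by_cases hx : x ∈ ball (0:ℝ) (R' + 1)
    · have h1 : χ₁ x = 1 := χ₁.one_of_mem_closedBall (ball_subset_closedBall hx)
      simp [hc, h1]
      positivity
    · have hxK : x ∉ K := by
        intro hxK
        apply hx
        have := hR hxK
        simp only [mem_closedBall, dist_zero_right] at this ⊢
        simp only [mem_ball, dist_zero_right] at *
        have : ‖x‖ ≤ R' := le_trans this (le_max_left _ _)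
        linarith
      have hfx : ‖f x‖ < ε / 4 := hK (by simpa using hxK)
      have : f x - c x = (1 - χ₁ x) • f x := by
        simp [hc, sub_smul, one_smul]
      rw [this, norm_smul]
      have h01 : (0:ℝ) ≤ χ₁ x := χ₁.nonneg
      have h11 : χ₁ x ≤ 1 := χ₁.le_one
      have : ‖(1 - χ₁ x : ℝ)‖ ≤ 1 := by
        rw [Real.norm_eq_abs, abs_le]; constructor <;> linarith
      calc ‖(1 - χ₁ x : ℝ)‖ * ‖f x‖ ≤ 1 * ‖f x‖ := by
            apply mul_le_mul_of_nonneg_right this (norm_nonneg _)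
        _ = ‖f x‖ := one_mul _
        _ ≤ ε / 4 := hfx.le
  -- Step 2: mollify `c` to a smooth compactly supported function.
  have huc : UniformContinuous c := hc_supp.uniformContinuous_of_continuous hc_cont
  obtain ⟨δ, hδ, hδc⟩ := Metric.uniformContinuous_iff.1 huc (ε / 4) hε4
  set φ : ContDiffBump (0:ℝ) := ⟨δ / 2, δ, half_pos hδ, half_lt_self hδ⟩ with hφ
  set h₀ : ℝ → ℂ := φ.normed volume ⋆[lsmul ℝ ℝ] c with hh₀
  have hch : ∀ x₀, ‖c x₀ - h₀ x₀‖ ≤ ε / 4 := by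
    intro x₀
    have key : dist (h₀ x₀) (c x₀) ≤ ε / 4 := by
      apply φ.dist_normed_convolution_le hc_cont.aestronglyMeasurable
      intro x hx
      have hx' : dist x x₀ < δ := by
        have : dist x x₀ < φ.rOut := mem_ball.mp hx
        exact this
      exact (hδc hx').le
    rw [norm_sub_rev, ← dist_eq_norm]
    exact key
  have hh₀_smooth : ContDiff ℝ ∞ h₀ :=
    HasCompactSupport.contDiff_convolution_left _ φ.hasCompactSupport_normed
      (φ.contDiff_normed) (hc_cont.locallyIntegrable)
  have hh₀_supp : HasCompactSupport h₀ :=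
    (φ.hasCompactSupport_normed (μ := volume)).convolution (ContinuousLinearMap.lsmul ℝ ℝ) hc_supp
  set h : SchwartzMap ℝ ℂ := hasCompactSupportToSchwartz hh₀_smooth hh₀_supp with hh
  have hfh : ∀ x, ‖f x - h x‖ ≤ ε / 2 := by
    intro x
    calc ‖f x - h x‖ = ‖(f x - c x) + (c x - h₀ x)‖ := by
          simp [hh, hasCompactSupportToSchwartz_apply]
      _ ≤ ‖f x - c x‖ + ‖c x - h₀ x‖ := norm_add_le _ _
      _ ≤ ε / 4 + ε / 4 := add_le_add (hfc x) (hch x)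
      _ = ε / 2 := by ring
  -- Step 3: band-limit `h` by cutting off its Fourier transform.
  set u : SchwartzMap ℝ ℂ := SchwartzMap.fourierTransformCLE ℝ (E := SchwartzMap ℝ ℂ) (F := SchwartzMap ℝ ℂ) h with hu
  have hu_int : Integrable (fun ξ => ‖u ξ‖) volume := u.integrable.norm
  -- find a radius beyond which the tail of `‖u‖` is small
  have htail : Tendsto (fun n : ℕ => ∫ ξ in (closedBall (0:ℝ) n)ᶜ, ‖u ξ‖) atTop
      (𝓝 (∫ ξ in ⋂ n : ℕ, (closedBall (0:ℝ) n)ᶜ, ‖u ξ‖)) := by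
    apply tendsto_setIntegral_of_antitone (fun n => measurableSet_closedBall.compl)
    · intro m n hmn
      apply Set.compl_subset_compl.2
      exact closedBall_subset_closedBall (by exact_mod_cast hmn)
    · exact ⟨0, hu_int.integrableOn⟩
  have hempty : (⋂ n : ℕ, (closedBall (0:ℝ) n)ᶜ) = ∅ := by
    ext x
    simp only [Set.mem_iInter, Set.mem_compl_iff, mem_closedBall, dist_zero_right,
      Set.mem_empty_iff_false, iff_false, not_forall, not_not]
    obtain ⟨n, hn⟩ := exists_nat_ge ‖x‖
    exact ⟨n, hn⟩
  rw [hempty] at htail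
  simp only [Measure.restrict_empty, integral_zero_measure] at htail
  have := (htail.eventually (eventually_lt_nhds hε4)).exists
  obtain ⟨n₀, hn₀⟩ := this
  -- the cutoff in frequency space
  set χ₂ : ContDiffBump (0:ℝ) := ⟨(n₀:ℝ) + 1, (n₀:ℝ) + 2, by positivity, by linarith⟩ with hχ₂
  have hw_smooth : ContDiff ℝ ∞ fun ξ : ℝ => χ₂ ξ • u ξ := χ₂.contDiff.smul (u.smooth ⊤)
  have hw_supp : HasCompactSupport fun ξ : ℝ => χ₂ ξ • u ξ := χ₂.hasCompactSupport.smul_right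
  set ψ : SchwartzMap ℝ ℂ := hasCompactSupportToSchwartz hw_smooth hw_supp with hψ
  set g : SchwartzMap ℝ ℂ := (SchwartzMap.fourierTransformCLE ℝ (E := SchwartzMap ℝ ℂ) (F := SchwartzMap ℝ ℂ)).symm ψ with hg
  refine ⟨g, ?_, ?_⟩
  · -- the Fourier transform of `g` is `ψ`, which has compact support
    have h1 : SchwartzMap.fourierTransformCLE ℝ (E := SchwartzMap ℝ ℂ) (F := SchwartzMap ℝ ℂ) g = ψ :=
      (SchwartzMap.fourierTransformCLE ℝ (E := SchwartzMap ℝ ℂ) (F := SchwartzMap ℝ ℂ)).apply_symm_apply ψ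
    have h2 : 𝓕 ⇑g = ⇑ψ := by
      rw [← SchwartzMap.fourier_coe]; exact congrArg _ h1
    rw [h2]
    exact hw_supp
  · -- the approximation bound
    intro x
    have hhg : ‖h x - g x‖ ≤ ε / 4 := by
      have hinv : h = (SchwartzMap.fourierTransformCLE ℝ (E := SchwartzMap ℝ ℂ) (F := SchwartzMap ℝ ℂ)).symm u :=
        ((SchwartzMap.fourierTransformCLE ℝ (E := SchwartzMap ℝ ℂ) (F := SchwartzMap ℝ ℂ)).symm_apply_apply h).symm
      have hdiff : h x - g x = ((SchwartzMap.fourierTransformCLE ℝ (E := SchwartzMap ℝ ℂ) (F := SchwartzMap ℝ ℂ)).symm (u - ψ)) x := by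
        rw [map_sub]
        rw [hinv]
        simp [SchwartzMap.sub_apply, hg, SchwartzMap.fourierTransformCLE_symm_apply]
      rw [hdiff]
      have hnorm : ‖((SchwartzMap.fourierTransformCLE ℝ (E := SchwartzMap ℝ ℂ) (F := SchwartzMap ℝ ℂ)).symm (u - ψ)) x‖
          ≤ ∫ ξ, ‖(u - ψ) ξ‖ := by
        have : ((SchwartzMap.fourierTransformCLE ℝ (E := SchwartzMap ℝ ℂ) (F := SchwartzMap ℝ ℂ)).symm (u - ψ)) x = 𝓕⁻ ⇑(u - ψ) x := by
          exact congrFun (SchwartzMap.fourierInv_coe (u - ψ)) x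
        rw [this]
        exact VectorFourier.norm_fourierIntegral_le_integral_norm _ _ _ _ _
      apply hnorm.trans
      have hmono : ∫ ξ, ‖(u - ψ) ξ‖
          ≤ ∫ ξ, Set.indicator (closedBall (0:ℝ) n₀)ᶜ (fun ξ => ‖u ξ‖) ξ := by
        apply integral_mono (u - ψ).integrable.norm
          (hu_int.indicator measurableSet_closedBall.compl)
        intro ξ
        by_cases hξ : ξ ∈ closedBall (0:ℝ) n₀
        · have hballs : ξ ∈ closedBall (0:ℝ) ((n₀:ℝ) + 1) :=
            closedBall_subset_closedBall (by linarith) hξ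
          have h1 : χ₂ ξ = 1 := χ₂.one_of_mem_closedBall hballs
          have h0 : (u - ψ) ξ = 0 := by
            simp [SchwartzMap.sub_apply, hψ, hasCompactSupportToSchwartz_apply, h1]
          show ‖(u - ψ) ξ‖ ≤ _
          rw [h0]
          simp [Set.indicator_apply, hξ]
        · rw [Set.indicator_of_mem (by simpa using hξ)]
          have h0 : (u - ψ) ξ = (1 - χ₂ ξ) • u ξ := by
            simp [SchwartzMap.sub_apply, hψ, hasCompactSupportToSchwartz_apply, sub_smul,
              one_smul]
          show ‖(u - ψ) ξ‖ ≤ _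
          rw [h0, norm_smul]
          have h01 : (0:ℝ) ≤ χ₂ ξ := χ₂.nonneg
          have h11 : χ₂ ξ ≤ 1 := χ₂.le_one
          have hle : ‖(1 - χ₂ ξ : ℝ)‖ ≤ 1 := by
            rw [Real.norm_eq_abs, abs_le]; constructor <;> linarith
          calc ‖(1 - χ₂ ξ : ℝ)‖ * ‖u ξ‖ ≤ 1 * ‖u ξ‖ :=
                mul_le_mul_of_nonneg_right hle (norm_nonneg _)
            _ = ‖u ξ‖ := one_mul _
      apply hmono.trans
      rw [integral_indicator measurableSet_closedBall.compl]
      exact hn₀.le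
    calc ‖f x - g x‖ = ‖(f x - h x) + (h x - g x)‖ := by ring_nf
      _ ≤ ‖f x - h x‖ + ‖h x - g x‖ := norm_add_le _ _
      _ ≤ ε / 2 + ε / 4 := add_le_add (hfh x) hhg
      _ < ε := by linarith
end
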